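/- arXiv:2408.13828 — 3 statements merged into one kernel-verified Lean document; each statement's English description precedes it below -/
import Mathlib

section
/- Let $\tau$ be a Markov kernel on $\mathbf{X}$ controlled by actions in $\prod_i \mathbf{U}^i$, $Q$ a measurement kernel from $\mathbf{X}$ to $\prod_i \mathbf{Y}^i$, and suppose $\inf_x \delta(\tau_x) > 0$, where $\tau_x(dx' \mid \mathbf{u}) = \tau(dx' \mid x, \mathbf{u})$. Then for any $x$ and any probability measures $\mu_1 \neq \mu_2$ on the action space, the induced joint measures $\mathrm{T}_x(\mu_j)(dx_1, d\mathbf{y}) = \int Q(d\mathbf{y} \mid x_1)\tau(dx_1 \mid x, \mathbf{u})\,\mu_j(d\mathbf{u})$ satisfy $\|\mathrm{T}_x(\mu_1) - \mathrm{T}_x(\mu_2)\|_{TV} \leq \sup_x \alpha(\tau_x) \|\mu_1 - \mu_2\|_{TV}$, hence the joint conditional mixing condition $\inf_x \delta(\mathrm{T}_x) > 0$ holds. -/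
open MeasureTheory ProbabilityTheory
open scoped ENNReal NNReal

/-- Total variation distance between two measures: `‖μ-ν‖_TV = 2 sup_B |μ(B)-ν(B)|`. -/
noncomputable def tv {X : Type*} [MeasurableSpace X] (μ ν : Measure X) : ℝ :=
  2 * ⨆ B : Set X, |(μ B).toReal - (ν B).toReal|

/-- Action of a kernel on a measure: `K(μ)(A) = ∫ K(x,A) μ(dx)`. -/
noncomputable def kApply {X Y : Type*} [MeasurableSpace X] [MeasurableSpace Y]
    (K : Kernel X Y) (μ : Measure X) : Measure Y :=
  μ.bind (fun x => K x)

/-- The contraction coefficient `α(K) = sup_{μ ≠ ν} ‖K(μ)-K(ν)‖_TV / ‖μ-ν‖_TV`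
(with the convention `0/0 = 0`, so pairs with `μ = ν` contribute `0`). -/
noncomputable def alphaK {X Y : Type*} [MeasurableSpace X] [MeasurableSpace Y]
    (K : Kernel X Y) : ℝ :=
  ⨆ p : ProbabilityMeasure X × ProbabilityMeasure X,
    tv (kApply K (p.1 : Measure X)) (kApply K (p.2 : Measure X)) /
      tv (p.1 : Measure X) (p.2 : Measure X)


/-- The Dobrushin coefficient `δ(K) = 1 - α(K)`. -/
noncomputable def dobrushin {X Y : Type*} [MeasurableSpace X] [MeasurableSpace Y]
    (K : Kernel X Y) : ℝ :=
  1 - alphaK K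

/-- The joint kernel `T_x(dx₁, dy ∣ u) = τ(dx₁ ∣ x, u) Q(dy ∣ x₁)` from the action
space to `P(X × Y)`. -/
noncomputable def jointT {X U Y : Type*} [MeasurableSpace X] [MeasurableSpace U]
    [MeasurableSpace Y] (τ : X → Kernel U X) (Q : Kernel X Y) (x : X) :
    Kernel U (X × Y) :=
  (τ x) ⊗ₖ (Kernel.prodMkLeft U Q)

section Aux

variable {X Y U Z : Type*} [MeasurableSpace X] [MeasurableSpace Y] [MeasurableSpace U]
  [MeasurableSpace Z]

lemma abs_measure_diff_le (m₁ m₂ : Measure X) [IsFiniteMeasure m₁] [IsFiniteMeasure m₂]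
    (A : Set X) :
    |(m₁ A).toReal - (m₂ A).toReal| ≤ (m₁ Set.univ).toReal + (m₂ Set.univ).toReal := by
  have h1 : (m₁ A).toReal ≤ (m₁ Set.univ).toReal :=
    ENNReal.toReal_mono (measure_ne_top _ _) (measure_mono (Set.subset_univ _))
  have h2 : (m₂ A).toReal ≤ (m₂ Set.univ).toReal :=
    ENNReal.toReal_mono (measure_ne_top _ _) (measure_mono (Set.subset_univ _))
  have h3 : (0:ℝ) ≤ (m₁ A).toReal := ENNReal.toReal_nonneg
  have h4 : (0:ℝ) ≤ (m₂ A).toReal := ENNReal.toReal_nonneg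
  rw [abs_sub_le_iff]
  constructor <;> linarith

lemma bddAbove_measure_diff (m₁ m₂ : Measure X) [IsFiniteMeasure m₁] [IsFiniteMeasure m₂] :
    BddAbove (Set.range fun A : Set X => |(m₁ A).toReal - (m₂ A).toReal|) := by
  refine ⟨(m₁ Set.univ).toReal + (m₂ Set.univ).toReal, ?_⟩
  rintro r ⟨A, rfl⟩
  exact abs_measure_diff_le m₁ m₂ A

lemma tv_nonneg (m₁ m₂ : Measure X) : 0 ≤ tv m₁ m₂ :=
  mul_nonneg (by norm_num) (Real.iSup_nonneg fun _ => abs_nonneg _)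

/-- Core lemma: difference of lintegrals of a `[0,1]`-valued function is bounded by the
sup of measure differences, via Hahn decomposition. -/
lemma lintegral_toReal_sub_le (m₁ m₂ : Measure X) [IsFiniteMeasure m₁] [IsFiniteMeasure m₂]
    {f : X → ℝ≥0∞} (_hf : Measurable f) (hf1 : ∀ x, f x ≤ 1) :
    (∫⁻ x, f x ∂m₁).toReal - (∫⁻ x, f x ∂m₂).toReal
      ≤ ⨆ A : Set X, |(m₁ A).toReal - (m₂ A).toReal| := by
  obtain ⟨s, hs, hss, hsc⟩ := hahn_decomposition (μ := m₁) (ν := m₂)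
  have hle : m₂.restrict s ≤ m₁.restrict s := by
    refine Measure.le_iff.2 fun t ht => ?_
    rw [Measure.restrict_apply ht, Measure.restrict_apply ht]
    exact hss _ (ht.inter hs) Set.inter_subset_right
  have hle' : m₁.restrict sᶜ ≤ m₂.restrict sᶜ := by
    refine Measure.le_iff.2 fun t ht => ?_
    rw [Measure.restrict_apply ht, Measure.restrict_apply ht]
    exact hsc _ (ht.inter hs.compl) Set.inter_subset_right
  have hfin : ∀ (m : Measure X) [IsFiniteMeasure m], ∫⁻ x, f x ∂m ≠ ⊤ := by
    intro m _
    have : ∫⁻ x, f x ∂m ≤ m Set.univ := by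
      calc ∫⁻ x, f x ∂m ≤ ∫⁻ _, 1 ∂m := lintegral_mono hf1
      _ = m Set.univ := by simp
    exact (lt_of_le_of_lt this (measure_lt_top _ _)).ne
  have hsub : m₂ s ≤ m₁ s := hss s hs subset_rfl
  have key : ∫⁻ x, f x ∂m₁ ≤ (m₁ s - m₂ s) + ∫⁻ x, f x ∂m₂ := by
    rw [← lintegral_add_compl f hs (μ := m₁), ← lintegral_add_compl f hs (μ := m₂)]
    have h2 : ∫⁻ x in sᶜ, f x ∂m₁ ≤ ∫⁻ x in sᶜ, f x ∂m₂ := lintegral_mono' hle' le_rfl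
    have h1 : ∫⁻ x in s, f x ∂m₁ ≤ (m₁ s - m₂ s) + ∫⁻ x in s, f x ∂m₂ := by
      have hd : (m₁.restrict s - m₂.restrict s) + m₂.restrict s = m₁.restrict s :=
        Measure.sub_add_cancel_of_le hle
      calc ∫⁻ x in s, f x ∂m₁
          = ∫⁻ x, f x ∂((m₁.restrict s - m₂.restrict s) + m₂.restrict s) := by rw [hd]
        _ = ∫⁻ x, f x ∂(m₁.restrict s - m₂.restrict s) + ∫⁻ x in s, f x ∂m₂ := by
            rw [lintegral_add_measure]
        _ ≤ (m₁ s - m₂ s) + ∫⁻ x in s, f x ∂m₂ := by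
            gcongr
            calc ∫⁻ x, f x ∂(m₁.restrict s - m₂.restrict s)
                ≤ ∫⁻ _, 1 ∂(m₁.restrict s - m₂.restrict s) := lintegral_mono hf1
              _ = (m₁.restrict s - m₂.restrict s) Set.univ := by simp
              _ = m₁.restrict s Set.univ - m₂.restrict s Set.univ :=
                  Measure.sub_apply MeasurableSet.univ hle
              _ = m₁ s - m₂ s := by simp
    calc ∫⁻ x in s, f x ∂m₁ + ∫⁻ x in sᶜ, f x ∂m₁
        ≤ ((m₁ s - m₂ s) + ∫⁻ x in s, f x ∂m₂) + ∫⁻ x in sᶜ, f x ∂m₂ := add_le_add h1 h2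
      _ = (m₁ s - m₂ s) + (∫⁻ x in s, f x ∂m₂ + ∫⁻ x in sᶜ, f x ∂m₂) := by rw [add_assoc]
  have hdne : m₁ s - m₂ s ≠ ⊤ := (tsub_le_self.trans_lt (measure_lt_top m₁ s)).ne
  have hkey : (∫⁻ x, f x ∂m₁).toReal
      ≤ (m₁ s).toReal - (m₂ s).toReal + (∫⁻ x, f x ∂m₂).toReal := by
    have h := ENNReal.toReal_mono (ENNReal.add_ne_top.2 ⟨hdne, hfin m₂⟩) key
    rwa [ENNReal.toReal_add hdne (hfin m₂),
      ENNReal.toReal_sub_of_le hsub (measure_ne_top m₁ s)] at h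
  have hmem : (m₁ s).toReal - (m₂ s).toReal
      ≤ ⨆ A : Set X, |(m₁ A).toReal - (m₂ A).toReal| :=
    le_trans (le_abs_self _) (le_ciSup (bddAbove_measure_diff m₁ m₂) s)
  linarith


lemma abs_lintegral_toReal_sub_le (m₁ m₂ : Measure X) [IsFiniteMeasure m₁] [IsFiniteMeasure m₂]
    {f : X → ℝ≥0∞} (hf : Measurable f) (hf1 : ∀ x, f x ≤ 1) :
    |(∫⁻ x, f x ∂m₁).toReal - (∫⁻ x, f x ∂m₂).toReal|
      ≤ ⨆ A : Set X, |(m₁ A).toReal - (m₂ A).toReal| := by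
  rw [abs_sub_le_iff]
  refine ⟨lintegral_toReal_sub_le m₁ m₂ hf hf1, ?_⟩
  have h := lintegral_toReal_sub_le m₂ m₁ hf hf1
  simpa [abs_sub_comm] using h

lemma exists_meas_superset (m₁ m₂ : Measure X) (B : Set X) :
    ∃ t, MeasurableSet t ∧ m₁ t = m₁ B ∧ m₂ t = m₂ B := by
  refine ⟨toMeasurable m₁ B ∩ toMeasurable m₂ B,
    (measurableSet_toMeasurable _ _).inter (measurableSet_toMeasurable _ _), ?_, ?_⟩
  · refine le_antisymm ?_ (measure_mono (Set.subset_inter (subset_toMeasurable _ _)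
      (subset_toMeasurable _ _)))
    calc m₁ (toMeasurable m₁ B ∩ toMeasurable m₂ B) ≤ m₁ (toMeasurable m₁ B) :=
        measure_mono Set.inter_subset_left
      _ = m₁ B := measure_toMeasurable B
  · refine le_antisymm ?_ (measure_mono (Set.subset_inter (subset_toMeasurable _ _)
      (subset_toMeasurable _ _)))
    calc m₂ (toMeasurable m₁ B ∩ toMeasurable m₂ B) ≤ m₂ (toMeasurable m₂ B) :=
        measure_mono Set.inter_subset_right
      _ = m₂ B := measure_toMeasurable B

/-- Generic data-processing inequality for `tv`. -/
lemma tv_le_tv (J₁ J₂ : Measure Z) (m₁ m₂ : Measure X) [IsFiniteMeasure m₁] [IsFiniteMeasure m₂]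
    (h : ∀ t : Set Z, MeasurableSet t → ∃ f : X → ℝ≥0∞, Measurable f ∧ (∀ x, f x ≤ 1) ∧
      J₁ t = ∫⁻ x, f x ∂m₁ ∧ J₂ t = ∫⁻ x, f x ∂m₂) :
    tv J₁ J₂ ≤ tv m₁ m₂ := by
  unfold tv
  refine mul_le_mul_of_nonneg_left ?_ (by norm_num)
  refine Real.iSup_le (fun B => ?_) (Real.iSup_nonneg fun _ => abs_nonneg _)
  obtain ⟨t, ht, h1, h2⟩ := exists_meas_superset J₁ J₂ B
  rw [← h1, ← h2]
  obtain ⟨f, hf, hf1, e1, e2⟩ := h t ht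
  rw [e1, e2]
  exact abs_lintegral_toReal_sub_le m₁ m₂ hf hf1

lemma tv_kApply_le (K : Kernel X Y) [IsMarkovKernel K] (m₁ m₂ : Measure X)
    [IsFiniteMeasure m₁] [IsFiniteMeasure m₂] :
    tv (kApply K m₁) (kApply K m₂) ≤ tv m₁ m₂ := by
  refine tv_le_tv _ _ m₁ m₂ fun t ht => ⟨fun x => K x t, K.measurable_coe ht,
    fun x => prob_le_one, ?_, ?_⟩ <;>
  · rw [kApply]
    exact Measure.bind_apply ht (Kernel.measurable K).aemeasurable

lemma tv_compProd_le (Q : Kernel X Y) [IsMarkovKernel Q] (m₁ m₂ : Measure X)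
    [IsProbabilityMeasure m₁] [IsProbabilityMeasure m₂] :
    tv (m₁ ⊗ₘ Q) (m₂ ⊗ₘ Q) ≤ tv m₁ m₂ := by
  refine tv_le_tv _ _ m₁ m₂ fun t ht =>
    ⟨fun a => Q a (Prod.mk a ⁻¹' t), ?_, fun a => prob_le_one, ?_, ?_⟩
  · exact Kernel.measurable_kernel_prodMk_left ht
  · exact Measure.compProd_apply ht
  · exact Measure.compProd_apply ht

lemma tv_ratio_le_one (K : Kernel X Y) [IsMarkovKernel K]
    (p : ProbabilityMeasure X × ProbabilityMeasure X) :
    tv (kApply K (p.1 : Measure X)) (kApply K (p.2 : Measure X)) /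
      tv (p.1 : Measure X) (p.2 : Measure X) ≤ 1 := by
  rcases eq_or_lt_of_le (tv_nonneg (p.1 : Measure X) (p.2 : Measure X)) with h | h
  · rw [← h, div_zero]; exact zero_le_one
  · rw [div_le_one h]
    exact tv_kApply_le K _ _

lemma alphaK_le_one (K : Kernel X Y) [IsMarkovKernel K] : alphaK K ≤ 1 :=
  Real.iSup_le (tv_ratio_le_one K) zero_le_one

lemma alphaK_nonneg (K : Kernel X Y) : 0 ≤ alphaK K :=
  Real.iSup_nonneg fun _ => div_nonneg (tv_nonneg _ _) (tv_nonneg _ _)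

lemma tv_kApply_le_alpha (K : Kernel X Y) [IsMarkovKernel K]
    (μ₁ μ₂ : ProbabilityMeasure X) :
    tv (kApply K (μ₁ : Measure X)) (kApply K (μ₂ : Measure X))
      ≤ alphaK K * tv (μ₁ : Measure X) (μ₂ : Measure X) := by
  rcases eq_or_lt_of_le (tv_nonneg (μ₁ : Measure X) (μ₂ : Measure X)) with h | h
  · have h1 := tv_kApply_le K (μ₁ : Measure X) (μ₂ : Measure X)
    have h2 := alphaK_nonneg K
    nlinarith
  · have hb : BddAbove (Set.range fun p : ProbabilityMeasure X × ProbabilityMeasure X =>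
        tv (kApply K (p.1 : Measure X)) (kApply K (p.2 : Measure X)) /
          tv (p.1 : Measure X) (p.2 : Measure X)) := by
      refine ⟨1, ?_⟩
      rintro r ⟨p, rfl⟩
      exact tv_ratio_le_one K p
    have := le_ciSup hb (μ₁, μ₂)
    exact (div_le_iff₀ h).1 this

lemma isProb_kApply (K : Kernel X Y) [IsMarkovKernel K] (μ : Measure X)
    [IsProbabilityMeasure μ] : IsProbabilityMeasure (kApply K μ) := by
  constructor
  rw [kApply, Measure.bind_apply MeasurableSet.univ (Kernel.measurable K).aemeasurable]
  simp

lemma kApply_jointT (τ : X → Kernel U X) [∀ x, IsMarkovKernel (τ x)]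
    (Q : Kernel X Y) [IsMarkovKernel Q] (x : X) (μ : Measure U) [IsProbabilityMeasure μ] :
    kApply (jointT τ Q x) μ = (kApply (τ x) μ) ⊗ₘ Q := by
  haveI := isProb_kApply (τ x) μ
  ext t ht
  rw [kApply, Measure.bind_apply ht (Kernel.measurable _).aemeasurable, Measure.compProd_apply ht, kApply,
    Measure.lintegral_bind (Kernel.measurable (τ x)).aemeasurable
      (Kernel.measurable_kernel_prodMk_left ht).aemeasurable]
  refine lintegral_congr fun u => ?_
  rw [jointT, Kernel.compProd_apply ht]
  simp only [Kernel.prodMkLeft_apply]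

lemma tv_jointT_le_alpha (τ : X → Kernel U X) [∀ x, IsMarkovKernel (τ x)]
    (Q : Kernel X Y) [IsMarkovKernel Q] (x : X) (μ₁ μ₂ : ProbabilityMeasure U) :
    tv (kApply (jointT τ Q x) (μ₁ : Measure U)) (kApply (jointT τ Q x) (μ₂ : Measure U))
      ≤ alphaK (τ x) * tv (μ₁ : Measure U) (μ₂ : Measure U) := by
  haveI := isProb_kApply (τ x) (μ₁ : Measure U)
  haveI := isProb_kApply (τ x) (μ₂ : Measure U)
  rw [kApply_jointT, kApply_jointT]
  calc tv ((kApply (τ x) (μ₁ : Measure U)) ⊗ₘ Q) ((kApply (τ x) (μ₂ : Measure U)) ⊗ₘ Q)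
      ≤ tv (kApply (τ x) (μ₁ : Measure U)) (kApply (τ x) (μ₂ : Measure U)) :=
        tv_compProd_le Q _ _
    _ ≤ alphaK (τ x) * tv (μ₁ : Measure U) (μ₂ : Measure U) := tv_kApply_le_alpha (τ x) μ₁ μ₂

end Aux

/-- If `inf_x δ(τ_x) > 0`, then for any `x` and probability measures `μ₁ ≠ μ₂` on the action
space, the induced joint measures satisfy
`‖T_x(μ₁) - T_x(μ₂)‖_TV ≤ sup_x α(τ_x) ‖μ₁ - μ₂‖_TV`, hence the joint conditional mixing
condition `inf_x δ(T_x) > 0` holds. -/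
theorem stmt4 {X U Y : Type*} [MeasurableSpace X] [MeasurableSpace U] [MeasurableSpace Y]
    (τ : X → Kernel U X) [∀ x, IsMarkovKernel (τ x)]
    (Q : Kernel X Y) [IsMarkovKernel Q]
    (hpos : 0 < ⨅ x, dobrushin (τ x)) :
    (∀ (x : X) (μ₁ μ₂ : ProbabilityMeasure U), μ₁ ≠ μ₂ →
        tv (kApply (jointT τ Q x) (μ₁ : Measure U)) (kApply (jointT τ Q x) (μ₂ : Measure U)) ≤
          (⨆ x, alphaK (τ x)) * tv (μ₁ : Measure U) (μ₂ : Measure U)) ∧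
      0 < ⨅ x, dobrushin (jointT τ Q x) := by
  have hbl : BddBelow (Set.range fun x => dobrushin (τ x)) := by
    refine ⟨0, ?_⟩
    rintro r ⟨x, rfl⟩
    simp only [dobrushin]
    linarith [alphaK_le_one (τ x)]
  haveI : Nonempty X := by
    by_contra h
    rw [not_nonempty_iff] at h
    simp only [iInf, Set.range_eq_empty, Real.sInf_empty] at hpos
    exact lt_irrefl 0 hpos
  have hxc : ∀ x, (⨅ x, dobrushin (τ x)) ≤ dobrushin (τ x) := fun x => ciInf_le hbl x
  constructor
  · intro x μ₁ μ₂ _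
    have hba : BddAbove (Set.range fun x => alphaK (τ x)) := by
      refine ⟨1, ?_⟩
      rintro r ⟨x, rfl⟩
      exact alphaK_le_one (τ x)
    calc tv (kApply (jointT τ Q x) (μ₁ : Measure U)) (kApply (jointT τ Q x) (μ₂ : Measure U))
        ≤ alphaK (τ x) * tv (μ₁ : Measure U) (μ₂ : Measure U) := tv_jointT_le_alpha τ Q x μ₁ μ₂
      _ ≤ (⨆ x, alphaK (τ x)) * tv (μ₁ : Measure U) (μ₂ : Measure U) :=
          mul_le_mul_of_nonneg_right (le_ciSup hba x) (tv_nonneg _ _)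
  · refine lt_of_lt_of_le hpos (le_ciInf fun x => ?_)
    have hA : alphaK (jointT τ Q x) ≤ alphaK (τ x) := by
      refine Real.iSup_le (fun p => ?_) (alphaK_nonneg (τ x))
      rcases eq_or_lt_of_le (tv_nonneg (p.1 : Measure U) (p.2 : Measure U)) with h | h
      · rw [← h, div_zero]
        exact alphaK_nonneg (τ x)
      · rw [div_le_iff₀ h]
        exact tv_jointT_le_alpha τ Q x p.1 p.2
    have := hxc x
    unfold dobrushin at *
    linarith
end

section
/- Let $\mathbf{X}$ be a compact metric space, $\tau$ a transition kernel on $\mathbf{X}$ parameterized by actions that is weakly continuous in $(x, u)$, and $h(x, y) \geq 0$ continuous in $x$ for each $y$. Given a fixed measurement vector $\mathbf{y} = (y^1, \dots, y^N)$ and action $\mathbf{u}$, define for a probability measure $Z$ on $\mathbf{X}$ with $\int \prod_{i=1}^N h(x, y^i)\, Z(dx) \neq 0$ the updated measure $F(Z,\mathbf{u},\mathbf{y})(A) = \frac{\int \tau(A \mid x, \mathbf{u}) \prod_i h(x, y^i)\, Z(dx)}{\int \prod_i h(x, y^i)\, Z(dx)}$. Then $F$ is continuous in $Z$ under weak convergence: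 if $Z_n \to Z$ weakly and the denominator for $Z$ is strictly positive, then $F(Z_n, \mathbf{u}, \mathbf{y}) \to F(Z, \mathbf{u}, \mathbf{y})$ weakly. -/
open MeasureTheory ProbabilityTheory Filter Topology

lemma bind_univ_eq {X : Type*} [MeasurableSpace X] (μ : Measure X)
    {κ : X → Measure X} (hκ : Measurable κ) (hP : ∀ x, IsProbabilityMeasure (κ x)) :
    μ.bind κ Set.univ = μ Set.univ := by
  rw [Measure.bind_apply MeasurableSet.univ hκ.aemeasurable,
    lintegral_congr fun x => (hP x).measure_univ, lintegral_one]

lemma integral_bind_of_bounded {X : Type*} [MeasurableSpace X] {μ : Measure X}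
    [IsFiniteMeasure μ] {κ : X → Measure X} (hκ : Measurable κ)
    (hP : ∀ x, IsProbabilityMeasure (κ x)) {g : X → ℝ} (hg : Measurable g)
    (hmeas : Measurable fun x => ∫ y, g y ∂(κ x)) {C : ℝ} (hC : ∀ x, |g x| ≤ C) :
    ∫ y, g y ∂(μ.bind κ) = ∫ x, ∫ y, g y ∂(κ x) ∂μ := by
  rcases isEmpty_or_nonempty X with hX | hX
  · simp [Subsingleton.elim μ 0, Subsingleton.elim (μ.bind κ) 0]
  have hC0 : 0 ≤ C := le_trans (abs_nonneg _) (hC hX.some)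
  haveI : IsFiniteMeasure (μ.bind κ) := by
    constructor
    rw [bind_univ_eq μ hκ hP]
    exact measure_lt_top μ _
  have hfin : ∀ x, IsFiniteMeasure (κ x) := fun x => haveI := hP x; inferInstance
  -- integrability facts
  have hgi : ∀ (ν : Measure X), IsFiniteMeasure ν → Integrable g ν := fun ν hν =>
    (integrable_const C).mono' hg.aestronglyMeasurable
      (Filter.Eventually.of_forall fun x => by simpa using hC x)
  -- nonnegative shifted function
  set f : X → ℝ := fun x => g x + C with hf
  have hf_nn : ∀ x, 0 ≤ f x := fun x => by
    have := (abs_le.mp (hC x)).1; simp only [hf]; linarith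
  have hf_meas : Measurable f := hg.add_const C
  have hf_bdd : ∀ x, |f x| ≤ 2 * C := fun x => by
    rw [abs_of_nonneg (hf_nn x)]
    have := (abs_le.mp (hC x)).2; simp only [hf]; linarith
  have hfi : ∀ (ν : Measure X), IsFiniteMeasure ν → Integrable f ν := fun ν hν =>
    ((hgi ν hν).add (integrable_const C))
  -- key computation for f
  have key : ∫ y, f y ∂(μ.bind κ) = ∫ x, ∫ y, f y ∂(κ x) ∂μ := by
    have hif : Measurable fun x => ∫ y, f y ∂(κ x) := by
      have : (fun x => ∫ y, f y ∂(κ x)) = fun x => (∫ y, g y ∂(κ x)) + C := by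
        funext x
        rw [integral_add (hgi _ (hfin x)) (integrable_const C),
          integral_const, measureReal_def, (hP x).measure_univ]
        simp
      rw [this]; exact hmeas.add_const C
    have hif_nn : ∀ x, 0 ≤ ∫ y, f y ∂(κ x) := fun x =>
      integral_nonneg hf_nn
    have hif_bdd : ∀ x, |∫ y, f y ∂(κ x)| ≤ 2 * C := fun x => by
      rw [abs_of_nonneg (hif_nn x)]
      calc ∫ y, f y ∂(κ x) ≤ ∫ _, (2 : ℝ) * C ∂(κ x) :=
            integral_mono (hfi _ (hfin x)) (integrable_const _)
              fun y => le_trans (le_abs_self _) (hf_bdd y)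
        _ = 2 * C := by rw [integral_const, measureReal_def, (hP x).measure_univ]; simp
    have hifi : Integrable (fun x => ∫ y, f y ∂(κ x)) μ :=
      (integrable_const (2 * C)).mono' hif.aestronglyMeasurable
        (Filter.Eventually.of_forall fun x => by simpa using hif_bdd x)
    have h1 : ENNReal.ofReal (∫ y, f y ∂(μ.bind κ)) = ∫⁻ y, ENNReal.ofReal (f y) ∂(μ.bind κ) :=
      ofReal_integral_eq_lintegral_ofReal (hfi _ inferInstance)
        (Filter.Eventually.of_forall hf_nn)
    have h2 : ∫⁻ y, ENNReal.ofReal (f y) ∂(μ.bind κ)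
        = ∫⁻ x, ∫⁻ y, ENNReal.ofReal (f y) ∂(κ x) ∂μ :=
      Measure.lintegral_bind hκ.aemeasurable (ENNReal.measurable_ofReal.comp hf_meas).aemeasurable
    have h3 : ∀ x, ∫⁻ y, ENNReal.ofReal (f y) ∂(κ x) = ENNReal.ofReal (∫ y, f y ∂(κ x)) :=
      fun x => (ofReal_integral_eq_lintegral_ofReal (hfi _ (hfin x))
        (Filter.Eventually.of_forall hf_nn)).symm
    have h4 : ENNReal.ofReal (∫ x, ∫ y, f y ∂(κ x) ∂μ)
        = ∫⁻ x, ENNReal.ofReal (∫ y, f y ∂(κ x)) ∂μ :=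
      ofReal_integral_eq_lintegral_ofReal hifi (Filter.Eventually.of_forall hif_nn)
    have := h1.trans (h2.trans ((lintegral_congr h3).trans h4.symm))
    have hl : 0 ≤ ∫ y, f y ∂(μ.bind κ) := integral_nonneg hf_nn
    have hr : 0 ≤ ∫ x, ∫ y, f y ∂(κ x) ∂μ := integral_nonneg hif_nn
    exact (ENNReal.ofReal_eq_ofReal_iff hl hr).mp this
  -- unfold f in key
  have expand : ∀ (ν : Measure X), IsFiniteMeasure ν →
      ∫ y, f y ∂ν = ∫ y, g y ∂ν + C * (ν Set.univ).toReal := fun ν hν => by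
    rw [integral_add (hgi ν hν) (integrable_const C), integral_const, measureReal_def]
    simp [mul_comm]
  rw [expand _ inferInstance] at key
  have expand2 : ∫ x, ∫ y, f y ∂(κ x) ∂μ = ∫ x, (∫ y, g y ∂(κ x) + C) ∂μ := by
    apply integral_congr_ae
    filter_upwards with x
    rw [expand _ (hfin x), (hP x).measure_univ]
    simp
  rw [expand2, integral_add _ (integrable_const C), integral_const, measureReal_def] at key
  · have huniv : ((μ.bind κ) Set.univ).toReal = (μ Set.univ).toReal := by
      rw [bind_univ_eq μ hκ hP]
    rw [huniv] at key
    simp only [smul_eq_mul, mul_comm] at key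
    linarith
  · exact (integrable_const C).mono' hmeas.aestronglyMeasurable
      (Filter.Eventually.of_forall fun x => by
        simp only [Real.norm_eq_abs]
        calc |∫ y, g y ∂(κ x)| ≤ ∫ y, |g y| ∂(κ x) := (by simpa using norm_integral_le_integral_norm g (μ := κ x))
          _ ≤ ∫ _, C ∂(κ x) := integral_mono (hgi _ (hfin x)).abs
              (integrable_const _) hC
          _ = C := by rw [integral_const, measureReal_def, (hP x).measure_univ]; simp)

lemma inv_ofReal_toReal {t : ℝ} (ht : 0 < t) :
    ((ENNReal.ofReal t)⁻¹).toReal = t⁻¹ := by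
  rw [← ENNReal.ofReal_inv_of_pos ht, ENNReal.toReal_ofReal (inv_nonneg.mpr ht.le)]

/-- The predictor update
`F(Z,u,y)(A) = (∫ τ(A ∣ x,u) ∏ᵢ h(x,yⁱ) Z(dx)) / (∫ ∏ᵢ h(x,yⁱ) Z(dx))`. -/
noncomputable def Fupd {X U Y : Type*} [MeasurableSpace X] [MeasurableSpace U]
    [MeasurableSpace Y] (τ : Kernel (X × U) X) (h : X → Y → ℝ) {N : ℕ}
    (ys : Fin N → Y) (u : U) (Z : Measure X) : Measure X :=
  (ENNReal.ofReal (∫ x, ∏ i, h x (ys i) ∂Z))⁻¹ •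
    ((Z.withDensity fun x => ENNReal.ofReal (∏ i, h x (ys i))).bind fun x => τ (x, u))

/-- On a compact metric state space, with `τ` weakly continuous in `(x,u)` and `h(⋅,y)`
continuous and nonnegative, the predictor update `F` is continuous in `Z` under weak
convergence: if `Zₙ → Z` weakly and the normalizing constant of `Z` is strictly positive,
then `F(Zₙ, u, y) → F(Z, u, y)` weakly. -/
theorem stmt9 {X U Y : Type*} [MetricSpace X] [CompactSpace X] [MeasurableSpace X]
    [BorelSpace X] [TopologicalSpace U] [MeasurableSpace U] [MeasurableSpace Y]
    (τ : Kernel (X × U) X) [IsMarkovKernel τ]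
    (hτ : ∀ g : BoundedContinuousFunction X ℝ, Continuous fun p : X × U => ∫ x, g x ∂(τ p))
    (h : X → Y → ℝ) (hcont : ∀ y, Continuous fun x => h x y) (hnn : ∀ x y, 0 ≤ h x y)
    {N : ℕ} (ys : Fin N → Y) (u : U)
    (Z : ProbabilityMeasure X) (Zn : ℕ → ProbabilityMeasure X)
    (hZ : Tendsto Zn atTop (𝓝 Z))
    (hpos : 0 < ∫ x, ∏ i, h x (ys i) ∂(Z : Measure X)) :
    ∀ g : BoundedContinuousFunction X ℝ,
      Tendsto (fun n => ∫ x, g x ∂(Fupd τ h ys u (Zn n : Measure X))) atTop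
        (𝓝 (∫ x, g x ∂(Fupd τ h ys u (Z : Measure X)))) := by
  intro g
  set p : X → ℝ := fun x => ∏ i, h x (ys i) with hp
  have hp_cont : Continuous p := continuous_finset_prod _ fun i _ => hcont (ys i)
  have hp_nn : ∀ x, 0 ≤ p x := fun x => Finset.prod_nonneg fun i _ => hnn x (ys i)
  set pB : BoundedContinuousFunction X ℝ := BoundedContinuousFunction.mkOfCompact ⟨p, hp_cont⟩
  have hM : ∀ x, p x ≤ ‖pB‖ := fun x =>
    le_trans (le_abs_self _) (pB.norm_coe_le_norm x)
  set κ : X → Measure X := fun x => τ (x, u) with hκ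
  have hκmeas : Measurable κ := τ.measurable.comp (measurable_id.prodMk measurable_const)
  have hκP : ∀ x, IsProbabilityMeasure (κ x) := fun x => inferInstance
  set Gg : X → ℝ := fun x => ∫ y, g y ∂(κ x) with hGg
  have hGg_cont : Continuous Gg := (hτ g).comp (continuous_id.prodMk continuous_const)
  -- the key formula
  have formula : ∀ (μ : Measure X), IsProbabilityMeasure μ →
      ∫ x, g x ∂(Fupd τ h ys u μ)
        = ((ENNReal.ofReal (∫ x, p x ∂μ))⁻¹).toReal * ∫ x, Gg x * p x ∂μ := by
    intro μ hμ
    haveI : IsFiniteMeasure (μ.withDensity fun x => ENNReal.ofReal (p x)) := by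
      constructor
      rw [withDensity_apply _ MeasurableSet.univ, setLIntegral_univ]
      calc ∫⁻ x, ENNReal.ofReal (p x) ∂μ ≤ ∫⁻ _, ENNReal.ofReal ‖pB‖ ∂μ :=
            lintegral_mono fun x => ENNReal.ofReal_le_ofReal (hM x)
        _ = ENNReal.ofReal ‖pB‖ * μ Set.univ := lintegral_const _
        _ < ⊤ := ENNReal.mul_lt_top ENNReal.ofReal_lt_top (measure_lt_top μ _)
    rw [Fupd, integral_smul_measure,
      integral_bind_of_bounded hκmeas hκP g.continuous.measurable hGg_cont.measurable
        (C := ‖g‖) (fun x => by simpa using g.norm_coe_le_norm x)]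
    have hwd : (fun x => ENNReal.ofReal (∏ i, h x (ys i)))
        = fun x => ((Real.toNNReal (p x) : NNReal) : ENNReal) := rfl
    rw [hwd, integral_withDensity_eq_integral_smul hp_cont.measurable.real_toNNReal]
    rw [smul_eq_mul]
    congr 1
    refine integral_congr_ae (Filter.Eventually.of_forall fun x => ?_)
    simp [NNReal.smul_def, Real.coe_toNNReal _ (hp_nn x), mul_comm, hGg]
  -- convergence of numerator and denominator
  have hc : Tendsto (fun n => ∫ x, p x ∂(Zn n : Measure X)) atTop
      (𝓝 (∫ x, p x ∂(Z : Measure X))) := by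
    have := (ProbabilityMeasure.tendsto_iff_forall_integral_tendsto.mp hZ) pB
    simpa [pB] using this
  have hA : Tendsto (fun n => ∫ x, Gg x * p x ∂(Zn n : Measure X)) atTop
      (𝓝 (∫ x, Gg x * p x ∂(Z : Measure X))) := by
    have := (ProbabilityMeasure.tendsto_iff_forall_integral_tendsto.mp hZ)
      (BoundedContinuousFunction.mkOfCompact ⟨fun x => Gg x * p x, hGg_cont.mul hp_cont⟩)
    simpa using this
  have main : Tendsto (fun n => ((ENNReal.ofReal (∫ x, p x ∂(Zn n : Measure X)))⁻¹).toReal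
      * ∫ x, Gg x * p x ∂(Zn n : Measure X)) atTop
      (𝓝 (((ENNReal.ofReal (∫ x, p x ∂(Z : Measure X)))⁻¹).toReal
        * ∫ x, Gg x * p x ∂(Z : Measure X))) := by
    rw [inv_ofReal_toReal hpos]
    refine Tendsto.congr' ?_ ((hc.inv₀ hpos.ne').mul hA)
    filter_upwards [hc.eventually (eventually_gt_nhds hpos)] with n hn
    rw [inv_ofReal_toReal hn]
  have e1 : ∀ n, ∫ x, g x ∂(Fupd τ h ys u (Zn n : Measure X))
      = ((ENNReal.ofReal (∫ x, p x ∂(Zn n : Measure X)))⁻¹).toReal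
        * ∫ x, Gg x * p x ∂(Zn n : Measure X) := fun n => formula _ inferInstance
  rw [formula _ inferInstance]
  exact main.congr fun n => (e1 n).symm
end

section
/- Let $\mathbf{X}$ be a compact metric space and let $h: \mathbf{X} \times \mathbf{Y} \to [0,\infty)$ be such that $h(\cdot, y)$ is continuous for each $y$ and $\int h(x,y)\psi(dy) = 1$. If $Z_n \to Z$ weakly in $\mathcal{P}(\mathbf{X})$, then $\sup_{A \in \mathcal{B}(\mathbf{Y})}\left|\int_{\mathbf{X}}\left(\int_A h(x,y)\,\psi(dy)\right) Z_n(dx) - \int_{\mathbf{X}}\left(\int_A h(x,y)\,\psi(dy)\right) Z(dx)\right| \to 0$; i.e., the induced measurement distributions $P(dy \mid Z_n)$ converge to $P(dy \mid Z)$ in total variation. -/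
/-!
Relative to `ψ`, the measurement distribution of a prior `μ` has density
`g_μ(y) = ∫ h(x, y) μ(dx)` (Fubini), and `∫_A g_μ dψ` is the quantity in the supremum.
Weak convergence `Zₙ → Z` gives `g_{Zₙ}(y) → g_Z(y)` for every `y`, since `h(·, y)` is
bounded and continuous on the compact space `X`; as all `g_μ` are probability densities,
Scheffé's lemma upgrades this to `‖g_{Zₙ} - g_Z‖₁ → 0`, which bounds the supremum over `A`.
Fubini needs `ψ` to be s-finite. This is arranged by restricting `ψ` to the union of the
σ-finite supports of `h(x, ·)` for `x` in a countable dense set: by continuity in `x`,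
every `h(x, ·)` vanishes off that union.
-/

open MeasureTheory Filter Topology

theorem MeasureTheory.Measure.sigmaFinite_restrict_iUnion {α ι : Type*} [MeasurableSpace α]
    [Countable ι] {μ : Measure α} {s : ι → Set α} (hs : ∀ i, MeasurableSet (s i))
    [∀ i, SigmaFinite (μ.restrict (s i))] : SigmaFinite (μ.restrict (⋃ i, s i)) := by
  refine Measure.sigmaFinite_of_countable (S := insert (⋃ i, s i)ᶜ
      (Set.range fun p : ι × ℕ => s p.1 ∩ spanningSets (μ.restrict (s p.1)) p.2))
    ((Set.countable_range _).insert _) ?_ ?_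
  · rintro _ (rfl | ⟨⟨i, n⟩, rfl⟩)
    · simp [Measure.restrict_apply (MeasurableSet.iUnion hs).compl, -Set.compl_iUnion]
    · calc μ.restrict (⋃ i, s i) (s i ∩ spanningSets (μ.restrict (s i)) n)
          ≤ μ (s i ∩ spanningSets (μ.restrict (s i)) n) := Measure.restrict_apply_le _ _
        _ = μ.restrict (s i) (spanningSets (μ.restrict (s i)) n) := by
          rw [Measure.restrict_apply (measurableSet_spanningSets _ _), Set.inter_comm]
        _ < ⊤ := measure_spanningSets_lt_top _ _
  · refine Set.eq_univ_of_forall fun a => ?_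
    by_cases ha : a ∈ ⋃ i, s i
    · obtain ⟨i, hi⟩ := Set.mem_iUnion.1 ha
      exact Set.mem_sUnion.2 ⟨_, Set.mem_insert_of_mem _
        ⟨(i, spanningSetsIndex (μ.restrict (s i)) a), rfl⟩, hi, mem_spanningSetsIndex _ _⟩
    · exact Set.mem_sUnion.2 ⟨_, Set.mem_insert _ _, ha⟩

theorem exists_sigmaFinite_restrict_forall_notMem_eq_zero {X Y : Type*} [TopologicalSpace X]
    [TopologicalSpace.SeparableSpace X] [MeasurableSpace Y] {ψ : Measure Y} {h : X → Y → ℝ}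
    (hcont : ∀ y, Continuous fun x => h x y) (hmeas : ∀ x, Measurable (h x))
    (hint : ∀ x, Integrable (h x) ψ) :
    ∃ S, MeasurableSet S ∧ SigmaFinite (ψ.restrict S) ∧ ∀ x, ∀ y ∉ S, h x y = 0 := by
  obtain ⟨D, hDc, hDd⟩ := TopologicalSpace.exists_countable_dense X
  have := hDc.to_subtype
  have hsupp (x : X) :
      ∃ t, MeasurableSet t ∧ (∀ y ∈ tᶜ, h x y = 0) ∧ SigmaFinite (ψ.restrict t) :=
    ((memLp_one_iff_integrable.2 (hint x)).finStronglyMeasurable_of_stronglyMeasurable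
      (hmeas x).stronglyMeasurable one_ne_zero ENNReal.one_ne_top).exists_set_sigmaFinite
  choose t ht_meas ht_zero ht_sf using hsupp
  refine ⟨⋃ x : D, t x, .iUnion fun x => ht_meas x,
    Measure.sigmaFinite_restrict_iUnion fun x => ht_meas x, fun x y hy => ?_⟩
  have hvanish : (fun x => h x y) = fun _ => 0 :=
    (hcont y).ext_on hDd continuous_const fun x hx =>
      ht_zero x y fun hxy => hy (Set.mem_iUnion.2 ⟨⟨x, hx⟩, hxy⟩)
  exact congrFun hvanish x

theorem tendsto_integral_abs_sub_of_tendsto_ae {α ι : Type*} [MeasurableSpace α] {μ : Measure α}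
    {l : Filter ι} [l.IsCountablyGenerated] {f : ι → α → ℝ} {g : α → ℝ}
    (hf_int : ∀ i, Integrable (f i) μ) (hg_int : Integrable g μ) (hf_nn : ∀ i, 0 ≤ᵐ[μ] f i)
    (hg_nn : 0 ≤ᵐ[μ] g) (hf_eq : ∀ i, ∫ a, f i a ∂μ = ∫ a, g a ∂μ)
    (hfg : ∀ᵐ a ∂μ, Tendsto (fun i => f i a) l (𝓝 (g a))) :
    Tendsto (fun i => ∫ a, |f i a - g a| ∂μ) l (𝓝 0) := by
  have hmin_int (i : ι) : Integrable (fun a => min (f i a) (g a)) μ :=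
    (hf_int i).inf hg_int
  have hmin : Tendsto (fun i => ∫ a, min (f i a) (g a) ∂μ) l (𝓝 (∫ a, g a ∂μ)) := by
    refine tendsto_integral_filter_of_dominated_convergence g
      (.of_forall fun i => (hmin_int i).aestronglyMeasurable) (.of_forall fun i => ?_) hg_int ?_
    · filter_upwards [hf_nn i, hg_nn] with a hfa hga
      rw [Real.norm_eq_abs, abs_of_nonneg (le_min hfa hga)]
      exact min_le_right _ _
    · filter_upwards [hfg] with a ha
      simpa using ha.min (tendsto_const_nhds (x := g a))
  have hsplit (i : ι) :
      ∫ a, |f i a - g a| ∂μ = 2 * ∫ a, g a ∂μ - 2 * ∫ a, min (f i a) (g a) ∂μ := by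
    have hpt (a : α) : |f i a - g a| = f i a + g a - 2 * min (f i a) (g a) := by
      rw [← max_sub_min_eq_abs']
      linarith [min_add_max (f i a) (g a)]
    simp only [hpt]
    rw [integral_sub (f := fun a => f i a + g a) ((hf_int i).add hg_int)
      ((hmin_int i).const_mul 2), integral_add (hf_int i) hg_int, integral_const_mul, hf_eq i]
    ring
  simp only [hsplit]
  simpa using (hmin.const_mul 2).const_sub (2 * ∫ a, g a ∂μ)

theorem abs_setIntegral_le_integral_abs {α : Type*} [MeasurableSpace α] {μ : Measure α}
    {f : α → ℝ} (hf : Integrable f μ) (A : Set α) :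
    |∫ a in A, f a ∂μ| ≤ ∫ a, |f a| ∂μ :=
  abs_integral_le_integral_abs.trans
    (setIntegral_le_integral hf.abs (.of_forall fun _ => abs_nonneg _))

section MixtureDensity

variable {X Y : Type*} [MeasurableSpace X] {h : X → Y → ℝ}

noncomputable def mixtureDensity (h : X → Y → ℝ) (μ : Measure X) (y : Y) : ℝ := ∫ x, h x y ∂μ

theorem mixtureDensity_nonneg (hnn : ∀ x y, 0 ≤ h x y) (μ : Measure X) (y : Y) :
    0 ≤ mixtureDensity h μ y :=
  integral_nonneg fun x => hnn x y

variable [MeasurableSpace Y] {ψ : Measure Y} [SFinite ψ]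

theorem integrable_uncurry_prod (hmeas : Measurable (Function.uncurry h))
    (hnn : ∀ x y, 0 ≤ h x y) (hint : ∀ x, ∫ y, h x y ∂ψ = 1) (μ : Measure X)
    [IsFiniteMeasure μ] : Integrable (Function.uncurry h) (μ.prod ψ) := by
  refine (integrable_prod_iff hmeas.aestronglyMeasurable).2 ⟨.of_forall fun x => ?_, ?_⟩
  · exact .of_integral_ne_zero (by simp [hint x])
  · simp only [Function.uncurry_apply_pair, Real.norm_eq_abs, abs_of_nonneg (hnn _ _), hint]
    exact integrable_const 1

variable {μ : Measure X} [SFinite μ]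

theorem integral_setIntegral_eq_setIntegral_mixtureDensity
    (hI : Integrable (Function.uncurry h) (μ.prod ψ)) (A : Set Y) :
    ∫ x, ∫ y in A, h x y ∂ψ ∂μ = ∫ y in A, mixtureDensity h μ y ∂ψ :=
  integral_integral_swap (hI.mono_measure (Measure.prod_mono le_rfl Measure.restrict_le_self))

theorem integrable_mixtureDensity (hI : Integrable (Function.uncurry h) (μ.prod ψ)) :
    Integrable (mixtureDensity h μ) ψ :=
  hI.integral_prod_right

theorem integral_mixtureDensity [IsProbabilityMeasure μ]
    (hI : Integrable (Function.uncurry h) (μ.prod ψ)) (hint : ∀ x, ∫ y, h x y ∂ψ = 1) :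
    ∫ y, mixtureDensity h μ y ∂ψ = 1 := by
  simpa [hint] using (integral_setIntegral_eq_setIntegral_mixtureDensity hI Set.univ).symm

end MixtureDensity

theorem tendsto_iSup_abs_integral_setIntegral_sub {X Y ι : Type*} [TopologicalSpace X]
    [CompactSpace X] [MeasurableSpace X] [OpensMeasurableSpace X] [MeasurableSpace Y]
    {ψ : Measure Y} [SFinite ψ] {h : X → Y → ℝ} (hmeas : Measurable (Function.uncurry h))
    (hcont : ∀ y, Continuous fun x => h x y) (hnn : ∀ x y, 0 ≤ h x y)
    (hint : ∀ x, ∫ y, h x y ∂ψ = 1) {l : Filter ι} [l.IsCountablyGenerated]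
    {Z : ι → ProbabilityMeasure X} {Zl : ProbabilityMeasure X} (hZ : Tendsto Z l (𝓝 Zl)) :
    Tendsto (fun i => ⨆ A : Set Y,
        |(∫ x, (∫ y in A, h x y ∂ψ) ∂(Z i : Measure X)) -
          ∫ x, (∫ y in A, h x y ∂ψ) ∂(Zl : Measure X)|) l (𝓝 0) := by
  have hI (μ : ProbabilityMeasure X) := integrable_uncurry_prod hmeas hnn hint (μ : Measure X)
  have hpt (y : Y) :
      Tendsto (fun i => mixtureDensity h (Z i) y) l (𝓝 (mixtureDensity h Zl y)) := by
    simpa [mixtureDensity] using ProbabilityMeasure.tendsto_iff_forall_integral_tendsto.1 hZ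
      (BoundedContinuousFunction.mkOfCompact ⟨fun x => h x y, hcont y⟩)
  have hL1 : Tendsto (fun i => ∫ y, |mixtureDensity h (Z i) y - mixtureDensity h Zl y| ∂ψ) l
      (𝓝 0) :=
    tendsto_integral_abs_sub_of_tendsto_ae (fun i => integrable_mixtureDensity (hI (Z i)))
      (integrable_mixtureDensity (hI Zl)) (fun i => .of_forall (mixtureDensity_nonneg hnn _))
      (.of_forall (mixtureDensity_nonneg hnn _))
      (fun i => by rw [integral_mixtureDensity (hI _) hint, integral_mixtureDensity (hI _) hint])
      (.of_forall hpt)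
  refine squeeze_zero (fun i => Real.iSup_nonneg fun A => abs_nonneg _)
    (fun i => ciSup_le fun A => ?_) hL1
  rw [integral_setIntegral_eq_setIntegral_mixtureDensity (hI _),
    integral_setIntegral_eq_setIntegral_mixtureDensity (hI _),
    ← integral_sub (integrable_mixtureDensity (hI _)).integrableOn
      (integrable_mixtureDensity (hI _)).integrableOn]
  exact abs_setIntegral_le_integral_abs
    ((integrable_mixtureDensity (hI _)).sub (integrable_mixtureDensity (hI _))) A

/-- On a compact metric state space, if the measurement channel has density `h(x,y)` with
respect to `ψ` (`h ≥ 0`, continuous in `x`, `∫ h(x,y) ψ(dy) = 1`), then weak convergence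
`Zₙ → Z` of priors implies total variation convergence of the induced measurement
distributions: `sup_A |∫ (∫_A h(x,y) ψ(dy)) Zₙ(dx) - ∫ (∫_A h(x,y) ψ(dy)) Z(dx)| → 0`. -/
theorem stmt16 {X Y : Type*} [MetricSpace X] [CompactSpace X] [MeasurableSpace X]
    [BorelSpace X] [MeasurableSpace Y] (ψ : Measure Y)
    (h : X → Y → ℝ) (hmeas : Measurable (Function.uncurry h))
    (hcont : ∀ y, Continuous fun x => h x y) (hnn : ∀ x y, 0 ≤ h x y)
    (hint : ∀ x, ∫ y, h x y ∂ψ = 1)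
    (Z : ℕ → ProbabilityMeasure X) (Zl : ProbabilityMeasure X)
    (hZ : Tendsto Z atTop (𝓝 Zl)) :
    Tendsto (fun n => ⨆ A : Set Y,
        |(∫ x, (∫ y in A, h x y ∂ψ) ∂(Z n : Measure X)) -
          ∫ x, (∫ y in A, h x y ∂ψ) ∂(Zl : Measure X)|)
      atTop (𝓝 0) := by
  obtain ⟨S, hS, _, hzero⟩ := exists_sigmaFinite_restrict_forall_notMem_eq_zero hcont
    (fun x => hmeas.of_uncurry_left) fun x => .of_integral_ne_zero (μ := ψ) (by simp [hint x])
  have hrestrict (x : X) (A : Set Y) :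
      ∫ y in A, h x y ∂ψ = ∫ y in A, h x y ∂(ψ.restrict S) := by
    rw [← Measure.restrict_comm hS, setIntegral_eq_integral_of_forall_compl_eq_zero (hzero x)]
  have hintS (x : X) : ∫ y, h x y ∂(ψ.restrict S) = 1 := by
    simpa [hint x] using (hrestrict x Set.univ).symm
  simp only [hrestrict]
  exact tendsto_iSup_abs_integral_setIntegral_sub hmeas hcont hnn hintS hZ
end
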